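/- 𝒜 is a constraint dissolving mapping for the constraint C: (a) for every X ∈ 𝓜, 𝒜(X) = X; and (b) for every X ∈ 𝓜 and every direction Z ∈ 𝓕, the Fréchet derivative of the composite map C∘𝒜 at X in direction Z vanishes: D(C∘𝒜)(X)[Z] = 0. -/

import Mathlib

open Matrix

attribute [local instance] Matrix.frobeniusNormedAddCommGroup Matrix.frobeniusNormedSpace

/-- Frobenius inner product `⟨A, B⟩ = tr(AᵀB)`. -/
noncomputable def frobInner {n p : ℕ} (A B : Matrix (Fin n) (Fin p) ℝ) : ℝ :=
  (Aᵀ * B).trace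

/-- The constraint map `C(X) = Xᵀ φ(X) − I_p`. -/
noncomputable def Cmap {n p : ℕ}
    (φ : Matrix (Fin n) (Fin p) ℝ →ₗ[ℝ] Matrix (Fin n) (Fin p) ℝ)
    (X : Matrix (Fin n) (Fin p) ℝ) : Matrix (Fin p) (Fin p) ℝ :=
  Xᵀ * φ X - 1

/-- The constraint dissolving operator `𝒜(X) = (3/2)X − (1/2)X φ(X)ᵀ X`. -/
noncomputable def Amap {n p : ℕ}
    (φ : Matrix (Fin n) (Fin p) ℝ →ₗ[ℝ] Matrix (Fin n) (Fin p) ℝ)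
    (X : Matrix (Fin n) (Fin p) ℝ) : Matrix (Fin n) (Fin p) ℝ :=
  (3/2 : ℝ) • X - (1/2 : ℝ) • (X * (φ X)ᵀ * X)

/-- `𝒢 = span{X₁ᵀ X₂ : X₁, X₂ ∈ 𝓕}`. -/
noncomputable def Gspan {n p : ℕ} (𝓕 : Submodule ℝ (Matrix (Fin n) (Fin p) ℝ)) :
    Submodule ℝ (Matrix (Fin p) (Fin p) ℝ) :=
  Submodule.span ℝ {T | ∃ X₁ ∈ 𝓕, ∃ X₂ ∈ 𝓕, T = X₁ᵀ * X₂}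

/-! On `𝓜` we have `(φ X)ᵀ X = 1`, so `𝒜` fixes `X` and its derivative at `X` in a direction
`Z` is `Z - ½ X S` with `S = (φ Z)ᵀ X + (φ X)ᵀ Z ∈ 𝒢`. As `φ (X S) = φ X ψ S`, the derivative of
`C` at `X` sends this to `Sᵀ - ½ (Sᵀ + ψ S)`, and polarizing `ψ ((φ Y)ᵀ Y) = Yᵀ φ Y` gives
`ψ S = Sᵀ`. -/

theorem LinearMap.hasFDerivAt_toContinuousLinearMap {𝕜 E F : Type*} [NontriviallyNormedField 𝕜]
    [CompleteSpace 𝕜] [NormedAddCommGroup E] [NormedSpace 𝕜 E] [FiniteDimensional 𝕜 E]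
    [NormedAddCommGroup F] [NormedSpace 𝕜 F] (f : E →ₗ[𝕜] F) (x : E) :
    HasFDerivAt f (LinearMap.toContinuousLinearMap f) x :=
  (LinearMap.toContinuousLinearMap f).hasFDerivAt

section MatrixCalculus

variable {𝕜 E : Type*} [RCLike 𝕜] [NormedAddCommGroup E] [NormedSpace 𝕜 E]
  {l m n : Type*} [Fintype l] [Fintype m] [Fintype n]

theorem Matrix.isBoundedBilinearMap_mul :
    IsBoundedBilinearMap 𝕜 fun P : Matrix l m 𝕜 × Matrix m n 𝕜 => P.1 * P.2 where
  add_left := Matrix.add_mul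
  smul_left := Matrix.smul_mul
  add_right := Matrix.mul_add
  smul_right c A B := Matrix.mul_smul A c B
  bound := ⟨1, one_pos, fun A B => by simpa using Matrix.frobenius_norm_mul A B⟩

theorem HasFDerivAt.matrix_mul {f : E → Matrix l m 𝕜} {g : E → Matrix m n 𝕜}
    {f' : E →L[𝕜] Matrix l m 𝕜} {g' : E →L[𝕜] Matrix m n 𝕜} {x : E}
    (hf : HasFDerivAt f f' x) (hg : HasFDerivAt g g' x) :
    ∃ D : E →L[𝕜] Matrix l n 𝕜,
      HasFDerivAt (fun y => f y * g y) D x ∧ ∀ z, D z = f' z * g x + f x * g' z := by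
  have h := (Matrix.isBoundedBilinearMap_mul.hasFDerivAt (f x, g x)).comp x (hf.prodMk hg)
  exact ⟨_, h, fun z => add_comm _ _⟩

theorem HasFDerivAt.matrix_transpose {f : E → Matrix m n 𝕜} {f' : E →L[𝕜] Matrix m n 𝕜} {x : E}
    (hf : HasFDerivAt f f' x) :
    ∃ D : E →L[𝕜] Matrix n m 𝕜, HasFDerivAt (fun y => (f y)ᵀ) D x ∧ ∀ z, D z = (f' z)ᵀ :=
  ⟨_, ((Matrix.transposeLinearEquiv m n 𝕜 𝕜).toLinearMap.hasFDerivAt_toContinuousLinearMap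
    (f x)).comp x hf, fun _ => rfl⟩

end MatrixCalculus

theorem Matrix.transpose_mul_eq_one_comm {m n R : Type*} [Fintype m] [CommSemiring R]
    [DecidableEq n] {A B : Matrix m n R} (h : Aᵀ * B = 1) : Bᵀ * A = 1 := by
  simpa using congrArg transpose h

section Linearization

variable {n p : ℕ} (φ : Matrix (Fin n) (Fin p) ℝ →ₗ[ℝ] Matrix (Fin n) (Fin p) ℝ)
  (X : Matrix (Fin n) (Fin p) ℝ)

theorem hasFDerivAt_Cmap :
    ∃ D : Matrix (Fin n) (Fin p) ℝ →L[ℝ] Matrix (Fin p) (Fin p) ℝ,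
      HasFDerivAt (Cmap φ) D X ∧ ∀ W, D W = Wᵀ * φ X + Xᵀ * φ W := by
  obtain ⟨T, hT, hTW⟩ := (hasFDerivAt_id X).matrix_transpose
  obtain ⟨D, hD, hDW⟩ := hT.matrix_mul (φ.hasFDerivAt_toContinuousLinearMap X)
  -- `D W` in the statement is elaborated with the product topology on matrices, not the
  -- Frobenius one, so `hDW` cannot be rewritten with; `Eq.trans` unifies the two up to defeq.
  exact ⟨D, hD.sub_const 1, fun W => (hDW W).trans (by rw [hTW]; rfl)⟩

theorem hasFDerivAt_Amap :
    ∃ D : Matrix (Fin n) (Fin p) ℝ →L[ℝ] Matrix (Fin n) (Fin p) ℝ,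
      HasFDerivAt (Amap φ) D X ∧ ∀ Z, D Z = (3/2 : ℝ) • Z -
        (1/2 : ℝ) • (Z * (φ X)ᵀ * X + X * (φ Z)ᵀ * X + X * (φ X)ᵀ * Z) := by
  obtain ⟨T, hT, hTZ⟩ := (φ.hasFDerivAt_toContinuousLinearMap X).matrix_transpose
  obtain ⟨D₁, hD₁, hD₁Z⟩ := (hasFDerivAt_id X).matrix_mul hT
  obtain ⟨D₂, hD₂, hD₂Z⟩ := hD₁.matrix_mul (hasFDerivAt_id X)
  have hA := ((hasFDerivAt_id X).const_smul (3/2 : ℝ)).sub (hD₂.const_smul (1/2 : ℝ))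
  refine ⟨_, hA, fun Z => ?_⟩
  show (3/2 : ℝ) • Z - (1/2 : ℝ) • D₂ Z = _
  rw [hD₂Z, hD₁Z, hTZ, Matrix.add_mul]
  rfl

end Linearization

section ConstraintDissolving

variable {n p : ℕ} {φ : Matrix (Fin n) (Fin p) ℝ →ₗ[ℝ] Matrix (Fin n) (Fin p) ℝ}
  {ψ : Matrix (Fin p) (Fin p) ℝ →ₗ[ℝ] Matrix (Fin p) (Fin p) ℝ}
  {𝓕 : Submodule ℝ (Matrix (Fin n) (Fin p) ℝ)} {X Z : Matrix (Fin n) (Fin p) ℝ}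

theorem Amap_eq_self (hX1 : Xᵀ * φ X = 1) : Amap φ X = X := by
  rw [Amap, Matrix.mul_assoc, Matrix.transpose_mul_eq_one_comm hX1, Matrix.mul_one, ← sub_smul]
  norm_num

theorem map_transpose_mul_add_transpose_mul (hψφ : ∀ X ∈ 𝓕, ψ ((φ X)ᵀ * X) = Xᵀ * φ X) (hX : X ∈ 𝓕) (hZ : Z ∈ 𝓕) :
    ψ ((φ Z)ᵀ * X + (φ X)ᵀ * Z) = Zᵀ * φ X + Xᵀ * φ Z := by
  have hXZ := hψφ (X + Z) (𝓕.add_mem hX hZ)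
  simp only [map_add, transpose_add, Matrix.add_mul, Matrix.mul_add, hψφ X hX, hψφ Z hZ] at hXZ
  rw [map_add]
  rw [← sub_eq_zero] at hXZ ⊢
  convert hXZ using 1
  abel

theorem Amap_linearization_eq (hX1 : Xᵀ * φ X = 1) :
    (3/2 : ℝ) • Z - (1/2 : ℝ) • (Z * (φ X)ᵀ * X + X * (φ Z)ᵀ * X + X * (φ X)ᵀ * Z) =
      Z - (1/2 : ℝ) • (X * ((φ Z)ᵀ * X + (φ X)ᵀ * Z)) := by
  rw [Matrix.mul_assoc Z, Matrix.transpose_mul_eq_one_comm hX1, Matrix.mul_one,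
    Matrix.mul_assoc X, Matrix.mul_assoc X, Matrix.mul_add]
  module

theorem Cmap_linearization_sub_half_mul (hφψ : ∀ X ∈ 𝓕, ∀ T ∈ Gspan 𝓕, φ (X * T) = φ X * ψ T)
    (hX : X ∈ 𝓕) (hX1 : Xᵀ * φ X = 1) {S : Matrix (Fin p) (Fin p) ℝ} (hS : S ∈ Gspan 𝓕) :
    (Z - (1/2 : ℝ) • (X * S))ᵀ * φ X + Xᵀ * φ (Z - (1/2 : ℝ) • (X * S)) =
      Zᵀ * φ X + Xᵀ * φ Z - (1/2 : ℝ) • (Sᵀ + ψ S) := by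
  rw [map_sub, map_smul, hφψ X hX S hS]
  simp only [transpose_sub, transpose_smul, transpose_mul, Matrix.sub_mul, Matrix.smul_mul,
    Matrix.mul_sub, Matrix.mul_smul, Matrix.mul_assoc Sᵀ, ← Matrix.mul_assoc Xᵀ (φ X), hX1,
    Matrix.mul_one, Matrix.one_mul]
  module

end ConstraintDissolving

theorem stmt_12_general {n p : ℕ}
    (φ : Matrix (Fin n) (Fin p) ℝ →ₗ[ℝ] Matrix (Fin n) (Fin p) ℝ)
    (𝓕 : Submodule ℝ (Matrix (Fin n) (Fin p) ℝ))
    (ψ : Matrix (Fin p) (Fin p) ℝ →ₗ[ℝ] Matrix (Fin p) (Fin p) ℝ)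
    (hφ𝓕 : ∀ X ∈ 𝓕, φ X ∈ 𝓕)
    (hφψ : ∀ X ∈ 𝓕, ∀ T ∈ Gspan 𝓕, φ (X * T) = φ X * ψ T)
    (hψφ : ∀ X ∈ 𝓕, ψ ((φ X)ᵀ * X) = Xᵀ * φ X)
    (X : Matrix (Fin n) (Fin p) ℝ) (hX : X ∈ 𝓕) (hX1 : Xᵀ * φ X = 1) :
    Amap φ X = X ∧
    ∃ D : Matrix (Fin n) (Fin p) ℝ →L[ℝ] Matrix (Fin p) (Fin p) ℝ,
      HasFDerivAt (fun Y => Cmap φ (Amap φ Y)) D X ∧ ∀ Z ∈ 𝓕, D Z = 0 := by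
  have hfix := Amap_eq_self hX1
  obtain ⟨DC, hC, hDC⟩ := hasFDerivAt_Cmap φ X
  obtain ⟨DA, hA, hDA⟩ := hasFDerivAt_Amap φ X
  refine ⟨hfix, DC.comp DA, (hfix ▸ hC).comp X hA, fun Z hZ => ?_⟩
  have hS : (φ Z)ᵀ * X + (φ X)ᵀ * Z ∈ Gspan 𝓕 :=
    add_mem (Submodule.subset_span ⟨φ Z, hφ𝓕 Z hZ, X, hX, rfl⟩)
      (Submodule.subset_span ⟨φ X, hφ𝓕 X hX, Z, hZ, rfl⟩)
  rw [ContinuousLinearMap.comp_apply, hDC, hDA, Amap_linearization_eq hX1,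
    Cmap_linearization_sub_half_mul hφψ hX hX1 hS, map_transpose_mul_add_transpose_mul hψφ hX hZ]
  simp only [transpose_add, transpose_mul, transpose_transpose]
  module

theorem stmt_12 {n p : ℕ} (hn : 0 < n) (hp : 0 < p)
    (φ : Matrix (Fin n) (Fin p) ℝ →ₗ[ℝ] Matrix (Fin n) (Fin p) ℝ)
    (𝓕 : Submodule ℝ (Matrix (Fin n) (Fin p) ℝ))
    (ψ : Matrix (Fin p) (Fin p) ℝ →ₗ[ℝ] Matrix (Fin p) (Fin p) ℝ)
    (hφ𝓕 : ∀ X ∈ 𝓕, φ X ∈ 𝓕)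
    (hXT : ∀ X ∈ 𝓕, ∀ T ∈ Gspan 𝓕, X * T ∈ 𝓕)
    (hφsa : ∀ A B : Matrix (Fin n) (Fin p) ℝ, frobInner (φ A) B = frobInner A (φ B))
    (hψG : ∀ T ∈ Gspan 𝓕, ψ T ∈ Gspan 𝓕)
    (hφψ : ∀ X ∈ 𝓕, ∀ T ∈ Gspan 𝓕, φ (X * T) = φ X * ψ T)
    (hψφ : ∀ X ∈ 𝓕, ψ ((φ X)ᵀ * X) = Xᵀ * φ X)
    (X : Matrix (Fin n) (Fin p) ℝ) (hX : X ∈ 𝓕) (hX1 : Xᵀ * φ X = 1) :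
    Amap φ X = X ∧
    ∃ D : Matrix (Fin n) (Fin p) ℝ →L[ℝ] Matrix (Fin p) (Fin p) ℝ,
      HasFDerivAt (fun Y => Cmap φ (Amap φ Y)) D X ∧ ∀ Z ∈ 𝓕, D Z = 0 :=
  stmt_12_general φ 𝓕 ψ hφ𝓕 hφψ hψφ X hX hX1
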